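/- Let G be a compact connected Lie group with normalized Haar measure, T ⊆ G a closed subgroup, and χ_λ : T → U(1) a continuous character of T. Define Γ(L_λ) = { f ∈ L²(G; ℂ) : f(gt) = χ_λ(t)⁻¹ f(g) for all t ∈ T and almost all g ∈ G }. Then Γ(L_λ) is a closed subspace of L²(G; ℂ) invariant under left translation by G, and for every irreducible finite-dimensional continuous unitary representation V_i of G, the multiplicity of V_i in Γ(L_λ) under the left translation action equals the dimension of the subspace { β ∈ V_i* : t · β = χ_λ(t) β for all t ∈ T }, i.e., equals dim (V_i* ⊗ ℂ_λ)^T. -/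

import Mathlib

/-!
The matrix coefficients `β ↦ (v ↦ [g ↦ β (π g⁻¹ v)])` embed `V*` into the `G`-equivariant linear
maps `V → L²(G)`, and such a coefficient satisfies `f (g t) = χ(t)⁻¹ f g` exactly when
`β ∘ π t = χ t • β`. Every equivariant `L` is a matrix coefficient: expanding `L` in a basis gives
functionals `ev g` with `L v = ev g v` for a.e. `g`, equivariance makes `g ↦ ev g ∘ π g` invariant
under left translation, and an `L²` function invariant under all left translations is a.e. constant
(pair it with continuous functions and average over `G`). Closedness and left invariance of
`Γ(L_λ)` hold because right translation by `t` is an isometry of `L²` commuting with left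
translations.
-/

open MeasureTheory Filter
open scoped ENNReal InnerProductSpace

namespace MeasureTheory.Lp

variable {α E 𝕜 : Type*} [MeasurableSpace α] {μ : Measure α} [NormedAddCommGroup E] {p : ℝ≥0∞}

theorem coeFn_finset_sum {ι : Type*} (s : Finset ι) (f : ι → Lp E p μ) :
    ⇑(∑ i ∈ s, f i) =ᵐ[μ] ∑ i ∈ s, ⇑(f i) := by
  classical
  induction s using Finset.induction_on with
  | empty => simpa using Lp.coeFn_zero E p μ
  | insert a s ha ih =>
    simp only [Finset.sum_insert ha]
    exact (Lp.coeFn_add _ _).trans (EventuallyEq.rfl.add ih)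

variable [NormedRing 𝕜] [Module 𝕜 E] [IsBoundedSMul 𝕜 E] {φ : α → α}

theorem compMeasurePreserving_eq_smul_iff (hφ : MeasurePreserving φ μ μ) (f : Lp E p μ) (c : 𝕜) :
    compMeasurePreserving φ hφ f = c • f ↔ (fun x => f (φ x)) =ᵐ[μ] fun x => c • f x := by
  rw [Lp.ext_iff, (coeFn_compMeasurePreserving f hφ).congr_left, (coeFn_smul c f).congr_right]
  rfl

theorem isClosed_setOf_comp_ae_eq_smul [Fact (1 ≤ p)] (hφ : MeasurePreserving φ μ μ) (c : 𝕜) :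
    IsClosed {f : Lp E p μ | (fun x => f (φ x)) =ᵐ[μ] fun x => c • f x} := by
  simp_rw [← compMeasurePreserving_eq_smul_iff hφ]
  exact isClosed_eq (isometry_compMeasurePreserving hφ).continuous (continuous_const_smul c)

end MeasureTheory.Lp

theorem ae_comp_mul_right_eq_smul_of_ae_eq_comp_mul_left {G M E : Type*} [Group G]
    [MeasurableSpace G] [MeasurableMul G] {μ : Measure G} [μ.IsMulLeftInvariant]
    [μ.IsMulRightInvariant] [SMul M E] {f f' : G → E} {a t : G} {c : M}
    (hf : (fun g => f (g * t)) =ᵐ[μ] fun g => c • f g) (hf' : f' =ᵐ[μ] fun g => f (a * g)) :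
    (fun g => f' (g * t)) =ᵐ[μ] fun g => c • f' g := by
  have hf_left : (fun g => f (a * g * t)) =ᵐ[μ] fun g => c • f (a * g) :=
    (measurePreserving_mul_left μ a).quasiMeasurePreserving.ae_eq_comp hf
  have hf'_right : (fun g => f' (g * t)) =ᵐ[μ] fun g => f (a * (g * t)) :=
    (measurePreserving_mul_right μ t).quasiMeasurePreserving.ae_eq_comp hf'
  filter_upwards [hf'_right, hf_left, hf'] with g h₁ h₂ h₃
  rw [h₁, ← mul_assoc, h₂, h₃]

theorem Module.Basis.ae_ext {α ι R M N : Type*} [MeasurableSpace α] {μ : Measure α} [Countable ι]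
    [Semiring R] [AddCommMonoid M] [Module R M] [AddCommMonoid N] [Module R N]
    (b : Module.Basis ι R M) {f f' : α → M →ₗ[R] N}
    (h : ∀ i, ∀ᵐ x ∂μ, f x (b i) = f' x (b i)) : ∀ᵐ x ∂μ, f x = f' x := by
  filter_upwards [ae_all_iff.mpr h] with x hx using b.ext hx

theorem LinearMap.exists_dual_ae_eq {X V : Type*} [TopologicalSpace X] [CompactSpace X]
    [MeasurableSpace X] [BorelSpace X] {μ : Measure X} {p : ℝ≥0∞}
    [NormedAddCommGroup V] [NormedSpace ℂ V] [FiniteDimensional ℂ V] (L : V →ₗ[ℂ] Lp ℂ p μ) :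
    ∃ ev : X → Module.Dual ℂ V, (∀ w, ⇑(L w) =ᵐ[μ] fun x => ev x w) ∧
      ∀ k : X → V, Continuous k → MemLp (fun x => ev x (k x)) p μ := by
  set b := Module.finBasis ℂ V
  refine ⟨fun x => ∑ i, L (b i) x • b.coord i, fun w => ?_, fun k hk => ?_⟩
  · have hLw : L w = ∑ i, b.repr w i • L (b i) := by
      conv_lhs => rw [← b.sum_repr w]
      simp only [map_sum, map_smul]
    rw [hLw]
    filter_upwards [Lp.coeFn_finset_sum Finset.univ fun i => b.repr w i • L (b i),
      ae_all_iff.mpr fun i => Lp.coeFn_smul (b.repr w i) (L (b i))] with x h₁ h₂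
    rw [h₁, Finset.sum_apply, LinearMap.sum_apply]
    refine Finset.sum_congr rfl fun i _ => ?_
    rw [h₂ i, Pi.smul_apply, LinearMap.smul_apply, b.coord_apply, smul_eq_mul, smul_eq_mul,
      mul_comm]
  · simp only [LinearMap.sum_apply, LinearMap.smul_apply, smul_eq_mul]
    refine memLp_finsetSum _ fun i _ => ?_
    exact (BoundedContinuousFunction.mkOfCompact
      ⟨_, (b.coord i).continuous_of_finiteDimensional.comp hk⟩).memLp_top.mul' (Lp.memLp (L (b i)))

section Ergodic

variable {G : Type*} [Group G] [TopologicalSpace G] [IsTopologicalGroup G]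

theorem ContinuousMap.continuous_comp_mulLeft {E : Type*} [TopologicalSpace E] (c : C(G, E)) :
    Continuous fun b => c.comp (ContinuousMap.mulLeft b) :=
  (c.comp ⟨fun p : G × G => p.1 * p.2, continuous_mul⟩).curry.continuous

variable [CompactSpace G] [MeasurableSpace G] [BorelSpace G] {μ : Measure G}

theorem ContinuousMap.integral_comp_mulLeft [IsFiniteMeasure μ] [μ.IsMulRightInvariant]
    {E : Type*} [NormedAddCommGroup E] [NormedSpace ℝ E] [CompleteSpace E] (c : C(G, E)) :
    ∫ b, c.comp (ContinuousMap.mulLeft b) ∂μ = ContinuousMap.const G (∫ g, c g ∂μ) := by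
  ext g
  rw [ContinuousMap.integral_apply (c.continuous_comp_mulLeft.integrable_of_hasCompactSupport
    (.of_compactSpace _))]
  exact integral_mul_right_eq_self (fun b => c b) g

theorem ContinuousLinearMap.eq_integral_mul_of_forall_comp_mulLeft [IsProbabilityMeasure μ]
    [μ.IsMulRightInvariant] (Λ : C(G, ℂ) →L[ℂ] ℂ)
    (hΛ : ∀ b c, Λ (c.comp (ContinuousMap.mulLeft b)) = Λ c) (c : C(G, ℂ)) :
    Λ c = (∫ g, c g ∂μ) * Λ 1 :=
  calc Λ c = ∫ b, Λ (c.comp (ContinuousMap.mulLeft b)) ∂μ := by simp [hΛ]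
    _ = Λ (∫ b, c.comp (ContinuousMap.mulLeft b) ∂μ) :=
      Λ.integral_comp_comm (c.continuous_comp_mulLeft.integrable_of_hasCompactSupport
        (.of_compactSpace _))
    _ = (∫ g, c g ∂μ) * Λ 1 := by
      rw [ContinuousMap.integral_comp_mulLeft, ← smul_eq_mul, ← map_smul]
      congr 1
      ext
      simp

theorem ContinuousMap.toLp_comp_mulLeft [IsFiniteMeasure μ] [μ.IsMulLeftInvariant]
    (c : C(G, ℂ)) (b : G) :
    ContinuousMap.toLp 2 μ ℂ (c.comp (ContinuousMap.mulLeft b)) =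
      Lp.compMeasurePreserving (b * ·) (measurePreserving_mul_left μ b)
        (ContinuousMap.toLp 2 μ ℂ c) := by
  rw [Lp.ext_iff]
  filter_upwards [ContinuousMap.coeFn_toLp (E := ℂ) (p := 2) (𝕜 := ℂ) μ
      (c.comp (ContinuousMap.mulLeft b)),
    Lp.coeFn_compMeasurePreserving (ContinuousMap.toLp 2 μ ℂ c) (measurePreserving_mul_left μ b),
    (measurePreserving_mul_left μ b).quasiMeasurePreserving.ae_eq_comp
      (ContinuousMap.coeFn_toLp (E := ℂ) (p := 2) (𝕜 := ℂ) μ c)] with g h₁ h₂ h₃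
  rw [h₁, h₂]
  exact h₃.symm

variable [μ.IsHaarMeasure] [IsProbabilityMeasure μ] [μ.IsMulRightInvariant]

theorem MeasureTheory.Lp.eq_inner_smul_one_of_forall_ae_comp_mul_left (F : Lp ℂ 2 μ)
    (hF : ∀ a, (fun g => F (a * g)) =ᵐ[μ] F) :
    F = ⟪ContinuousMap.toLp 2 μ ℂ 1, F⟫_ℂ • ContinuousMap.toLp 2 μ ℂ 1 := by
  have hF' (a : G) : Lp.compMeasurePreserving (a * ·) (measurePreserving_mul_left μ a) F = F := by
    simpa using (Lp.compMeasurePreserving_eq_smul_iff (𝕜 := ℂ) _ F 1).mpr (by simpa using hF a)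
  have hinv (b : G) (c : C(G, ℂ)) :
      ⟪F, ContinuousMap.toLp 2 μ ℂ (c.comp (ContinuousMap.mulLeft b))⟫_ℂ =
        ⟪F, ContinuousMap.toLp 2 μ ℂ c⟫_ℂ := by
    rw [ContinuousMap.toLp_comp_mulLeft]
    conv_lhs => rw [← hF' b]
    exact (Lp.compMeasurePreservingₗᵢ (E := ℂ) (p := (2 : ℝ≥0∞)) ℂ _
      (measurePreserving_mul_left μ b)).inner_map_map _ _
  refine (ContinuousMap.toLp_denseRange (E := ℂ) (μ := μ) (𝕜 := ℂ) (p := 2)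
    ENNReal.ofNat_ne_top).eq_of_inner_left ℂ fun c => ?_
  refine (((innerSL ℂ F).comp (ContinuousMap.toLp 2 μ ℂ)).eq_integral_mul_of_forall_comp_mulLeft
    (μ := μ) hinv c).trans ?_
  simp [inner_smul_left, ContinuousMap.inner_toLp, mul_comm]

theorem MeasureTheory.MemLp.exists_ae_eq_const_of_forall_ae_comp_mul_left {f : G → ℂ}
    (hf : MemLp f 2 μ) (h : ∀ a, (fun g => f (a * g)) =ᵐ[μ] f) : ∃ m, f =ᵐ[μ] fun _ => m := by
  have hF (a : G) : (fun g => hf.toLp f (a * g)) =ᵐ[μ] hf.toLp f :=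
    ((measurePreserving_mul_left μ a).quasiMeasurePreserving.ae_eq_comp hf.coeFn_toLp).trans
      ((h a).trans hf.coeFn_toLp.symm)
  refine ⟨⟪ContinuousMap.toLp 2 μ ℂ 1, hf.toLp f⟫_ℂ, ?_⟩
  filter_upwards [hf.coeFn_toLp,
    Lp.ext_iff.mp (Lp.eq_inner_smul_one_of_forall_ae_comp_mul_left _ hF),
    Lp.coeFn_smul (⟪ContinuousMap.toLp 2 μ ℂ 1, hf.toLp f⟫_ℂ)
      (ContinuousMap.toLp 2 μ ℂ (1 : C(G, ℂ))),
    ContinuousMap.coeFn_toLp (E := ℂ) (p := 2) (𝕜 := ℂ) μ (1 : C(G, ℂ))] with g h₁ h₂ h₃ h₄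
  rw [← h₁, h₂, h₃, Pi.smul_apply, h₄]
  simp

end Ergodic

noncomputable section MatrixCoefficients

variable {G V : Type*} [Group G] [TopologicalSpace G] [IsTopologicalGroup G]
  [NormedAddCommGroup V] [NormedSpace ℂ V] [FiniteDimensional ℂ V]
  (ρ : Representation ℂ G V) (hρ : ∀ v, Continuous fun g => ρ g v)

def matrixCoeff : Module.Dual ℂ V →ₗ[ℂ] V →ₗ[ℂ] C(G, ℂ) :=
  LinearMap.mk₂ ℂ (fun β v => ⟨fun g => β (ρ g⁻¹ v),
      β.continuous_of_finiteDimensional.comp ((hρ v).comp continuous_inv)⟩)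
    (fun _ _ _ => by ext; simp) (fun _ _ _ => by ext; simp)
    (fun _ _ _ => by ext; simp) (fun _ _ _ => by ext; simp)

@[simp]
theorem matrixCoeff_apply (β : Module.Dual ℂ V) (v : V) (g : G) :
    matrixCoeff ρ hρ β v g = β (ρ g⁻¹ v) :=
  rfl

variable [CompactSpace G] [MeasurableSpace G] [BorelSpace G] (μ : Measure G) [IsFiniteMeasure μ]

def matrixCoeffLp : Module.Dual ℂ V →ₗ[ℂ] V →ₗ[ℂ] Lp ℂ 2 μ :=
  (matrixCoeff ρ hρ).compr₂ (ContinuousMap.toLp 2 μ ℂ : C(G, ℂ) →L[ℂ] Lp ℂ 2 μ).toLinearMap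

theorem matrixCoeffLp_ae_eq (β : Module.Dual ℂ V) (v : V) :
    ⇑(matrixCoeffLp ρ hρ μ β v) =ᵐ[μ] fun g => β (ρ g⁻¹ v) :=
  ContinuousMap.coeFn_toLp μ (matrixCoeff ρ hρ β v)

theorem matrixCoeffLp_injective [μ.IsOpenPosMeasure] :
    Function.Injective (matrixCoeffLp ρ hρ μ) := by
  intro β₁ β₂ h
  ext v
  have := ContinuousMap.toLp_injective μ (LinearMap.congr_fun h v)
  simpa using DFunLike.congr_fun this 1

theorem matrixCoeffLp_comp_mul_left [μ.IsMulLeftInvariant] (β : Module.Dual ℂ V) (v : V) (a : G) :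
    (fun g => matrixCoeffLp ρ hρ μ β v (a⁻¹ * g)) =ᵐ[μ] matrixCoeffLp ρ hρ μ β (ρ a v) := by
  filter_upwards [(measurePreserving_mul_left μ a⁻¹).quasiMeasurePreserving.ae_eq_comp
      (matrixCoeffLp_ae_eq ρ hρ μ β v), matrixCoeffLp_ae_eq ρ hρ μ β (ρ a v)] with g h₁ h₂
  rw [Function.comp_apply] at h₁
  rw [h₁, h₂]
  simp [mul_inv_rev, map_mul]

theorem matrixCoeffLp_comp_mul_right_ae_eq_iff [μ.IsMulRightInvariant] [μ.IsOpenPosMeasure]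
    (β : Module.Dual ℂ V) (t : G) {c : ℂ} (hc : c ≠ 0) :
    (∀ v, (fun g => matrixCoeffLp ρ hρ μ β v (g * t)) =ᵐ[μ]
        fun g => c⁻¹ * matrixCoeffLp ρ hρ μ β v g) ↔
      ∀ v, β (ρ t v) = c * β v := by
  have hcongr (v : V) : ((fun g => matrixCoeffLp ρ hρ μ β v (g * t)) =ᵐ[μ]
        fun g => c⁻¹ * matrixCoeffLp ρ hρ μ β v g) ↔
      ∀ g, β (ρ (g * t)⁻¹ v) = c⁻¹ * β (ρ g⁻¹ v) := by
    have hright : (fun g => matrixCoeffLp ρ hρ μ β v (g * t)) =ᵐ[μ] fun g => β (ρ (g * t)⁻¹ v) :=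
      (measurePreserving_mul_right μ t).quasiMeasurePreserving.ae_eq_comp
        (matrixCoeffLp_ae_eq ρ hρ μ β v)
    have hscaled : (fun g => c⁻¹ * matrixCoeffLp ρ hρ μ β v g) =ᵐ[μ]
        fun g => c⁻¹ * β (ρ g⁻¹ v) :=
      (matrixCoeffLp_ae_eq ρ hρ μ β v).fun_comp (c⁻¹ * ·)
    have hcont : Continuous fun g => β (ρ (g * t)⁻¹ v) :=
      (matrixCoeff ρ hρ β v).continuous.comp (continuous_mul_const t)
    have hcont' : Continuous fun g => c⁻¹ * β (ρ g⁻¹ v) :=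
      continuous_const.mul (matrixCoeff ρ hρ β v).continuous
    rw [hright.congr_left, hscaled.congr_right, Continuous.ae_eq_iff_eq μ hcont hcont', funext_iff]
  simp only [hcongr, mul_inv_rev, map_mul, Module.End.mul_apply]
  constructor
  · intro h v
    simpa [eq_inv_mul_iff_mul_eq₀ hc, eq_comm] using h (ρ t v) 1
  · intro h v g
    rw [eq_inv_mul_iff_mul_eq₀ hc, ← h, Representation.self_inv_apply]

theorem exists_matrixCoeffLp_eq [μ.IsHaarMeasure] [IsProbabilityMeasure μ] [μ.IsMulRightInvariant]
    (L : V →ₗ[ℂ] Lp ℂ 2 μ) (hL : ∀ a v, (fun g => L v (a⁻¹ * g)) =ᵐ[μ] L (ρ a v)) :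
    ∃ β, matrixCoeffLp ρ hρ μ β = L := by
  obtain ⟨ev, hev, hmem⟩ := L.exists_dual_ae_eq
  set b := Module.finBasis ℂ V
  have hev_equivariant (a : G) : ∀ᵐ g ∂μ, ev (a * g) ∘ₗ ρ a = ev g := by
    refine b.ae_ext fun i => ?_
    have hmul := (measurePreserving_mul_left μ a).quasiMeasurePreserving
    filter_upwards [hmul.ae_eq_comp (hev (ρ a (b i))), hmul.ae_eq_comp (hL a (b i)), hev (b i)]
      with g h₁ h₂ h₃
    simp only [Function.comp_apply, inv_mul_cancel_left] at h₁ h₂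
    rw [LinearMap.comp_apply, ← h₁, ← h₂, h₃]
  set θ : G → Module.Dual ℂ V := fun g => ev g ∘ₗ ρ g
  have hθ_const (i) : ∃ c, (fun g => θ g (b i)) =ᵐ[μ] fun _ => c := by
    refine (hmem _ (hρ (b i))).exists_ae_eq_const_of_forall_ae_comp_mul_left fun a => ?_
    filter_upwards [hev_equivariant a] with g hg
    simp only [LinearMap.comp_apply, map_mul, Module.End.mul_apply, ← hg]
  choose c hc using hθ_const
  refine ⟨b.constr ℂ c, LinearMap.ext fun w => Lp.ext ?_⟩
  have hθ : ∀ᵐ g ∂μ, θ g = b.constr ℂ c := b.ae_ext fun i =>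
    (hc i).mono fun g hg => hg.trans (b.constr_basis ℂ c i).symm
  filter_upwards [matrixCoeffLp_ae_eq ρ hρ μ (b.constr ℂ c) w, hev w, hθ] with g h₁ h₂ h₃
  rw [h₁, h₂, ← h₃, LinearMap.comp_apply, Representation.self_inv_apply]

end MatrixCoefficients

def Representation.ofIsometries {G R V : Type*} [Group G] [Semiring R]
    [SeminormedAddCommGroup V] [Module R V] (π : G →* (V ≃ₗᵢ[R] V)) : Representation R G V where
  toFun g := (π g).toLinearEquiv
  map_one' := by ext; simp
  map_mul' _ _ := by ext; simp

theorem prequantization_multiplicities_general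
    (G : Type) [Group G] [TopologicalSpace G] [IsTopologicalGroup G]
    [CompactSpace G] [MeasurableSpace G] [BorelSpace G]
    (μ : Measure G) [μ.IsHaarMeasure] [IsProbabilityMeasure μ] [μ.IsMulRightInvariant]
    -- a closed subgroup T (in the intended application, a maximal torus):
    (T : Subgroup G)
    -- a continuous unitary character χ_λ of T:
    (χ : T →* ℂ)
    -- Γ(L_λ), the subspace of L²(G;ℂ) of f with f(gt) = χ_λ(t)⁻¹ f(g):
    (Γ : Submodule ℂ (Lp ℂ 2 μ))
    (hΓ : ∀ f : Lp ℂ 2 μ, f ∈ Γ ↔ ∀ t : T,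
      (fun g => f (g * (t : G))) =ᵐ[μ] fun g => (χ t)⁻¹ * f g)
    -- an irreducible finite-dimensional continuous unitary representation (π, V) of G:
    (V : Type) [NormedAddCommGroup V] [InnerProductSpace ℂ V] [FiniteDimensional ℂ V]
    (π : G →* (V ≃ₗᵢ[ℂ] V)) (hπcont : ∀ v : V, Continuous fun g => π g v)
    -- Hom_G(V, Γ(L_λ)): the space of G-equivariant linear maps V → L²(G;ℂ) with
    -- range contained in Γ(L_λ) (G acting by left translation on functions):
    (HomGΓ : Submodule ℂ (V →ₗ[ℂ] Lp ℂ 2 μ))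
    (hHom : ∀ L : V →ₗ[ℂ] Lp ℂ 2 μ, L ∈ HomGΓ ↔
      ((∀ v : V, L v ∈ Γ) ∧
        ∀ (gL : G) (v : V), (fun g => (L v) (gL⁻¹ * g)) =ᵐ[μ] ⇑(L (π gL v))))
    -- the weight subspace (V* ⊗ ℂ_λ)^T = { β ∈ V* : β ∘ π(t) = χ_λ(t)·β ∀ t ∈ T }:
    (Wt : Submodule ℂ (Module.Dual ℂ V))
    (hWt : ∀ β : Module.Dual ℂ V, β ∈ Wt ↔ ∀ (t : T) (v : V),
      β (π (t : G) v) = χ t * β v) :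
    -- Γ(L_λ) is a closed subspace:
    IsClosed (Γ : Set (Lp ℂ 2 μ)) ∧
    -- Γ(L_λ) is invariant under left translation by G:
    (∀ f ∈ Γ, ∀ gL : G, ∀ f' : Lp ℂ 2 μ,
      (⇑f' =ᵐ[μ] fun g => f (gL⁻¹ * g)) → f' ∈ Γ) ∧
    -- the multiplicity of V in Γ(L_λ) equals dim (V* ⊗ ℂ_λ)^T:
    Module.finrank ℂ HomGΓ = Module.finrank ℂ Wt := by
  set ρ := Representation.ofIsometries π
  have hχ (t : T) : χ t ≠ 0 := ((Group.isUnit t).map χ).ne_zero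
  have hcoeff_mem (β : Module.Dual ℂ V) : (∀ v, matrixCoeffLp ρ hπcont μ β v ∈ Γ) ↔ β ∈ Wt := by
    simp only [hΓ, hWt]
    rw [forall_comm]
    exact forall_congr' fun t => matrixCoeffLp_comp_mul_right_ae_eq_iff ρ hπcont μ β t (hχ t)
  have hHomGΓ : HomGΓ = Wt.map (matrixCoeffLp ρ hπcont μ) := by
    ext L
    rw [hHom, Submodule.mem_map]
    constructor
    · rintro ⟨hLΓ, hL⟩
      obtain ⟨β, rfl⟩ := exists_matrixCoeffLp_eq ρ hπcont μ L hL
      exact ⟨β, (hcoeff_mem β).mp hLΓ, rfl⟩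
    · rintro ⟨β, hβ, rfl⟩
      exact ⟨(hcoeff_mem β).mpr hβ, fun a v => matrixCoeffLp_comp_mul_left ρ hπcont μ β v a⟩
  refine ⟨?_, fun f hf a f' hf' => ?_, ?_⟩
  · have hΓ_eq : (Γ : Set (Lp ℂ 2 μ)) =
        ⋂ t : T, {f | (fun g => f (g * t)) =ᵐ[μ] fun g => (χ t)⁻¹ • f g} := by
      ext f
      simp [hΓ]
    rw [hΓ_eq]
    exact isClosed_iInter fun t =>
      Lp.isClosed_setOf_comp_ae_eq_smul (measurePreserving_mul_right μ (t : G)) _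
  · rw [hΓ] at hf ⊢
    exact fun t => ae_comp_mul_right_eq_smul_of_ae_eq_comp_mul_left (c := (χ t)⁻¹) (hf t) hf'
  · rw [hHomGΓ]
    exact (Submodule.equivMapOfInjective _ (matrixCoeffLp_injective ρ hπcont μ) Wt).finrank_eq.symm

theorem prequantization_multiplicities
    (G : Type) [Group G] [TopologicalSpace G] [IsTopologicalGroup G]
    [CompactSpace G] [T2Space G] [ConnectedSpace G] [MeasurableSpace G] [BorelSpace G]
    (μ : Measure G) [μ.IsHaarMeasure] [IsProbabilityMeasure μ] [μ.IsMulRightInvariant]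
    -- a closed subgroup T (in the intended application, a maximal torus):
    (T : Subgroup G) (hT : IsClosed (T : Set G))
    -- a continuous unitary character χ_λ of T:
    (χ : T →* ℂ) (hχcont : Continuous χ) (hχunit : ∀ t : T, ‖χ t‖ = 1)
    -- Γ(L_λ), the subspace of L²(G;ℂ) of f with f(gt) = χ_λ(t)⁻¹ f(g):
    (Γ : Submodule ℂ (Lp ℂ 2 μ))
    (hΓ : ∀ f : Lp ℂ 2 μ, f ∈ Γ ↔ ∀ t : T,
      (fun g => f (g * (t : G))) =ᵐ[μ] fun g => (χ t)⁻¹ * f g)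
    -- an irreducible finite-dimensional continuous unitary representation (π, V) of G:
    (V : Type) [NormedAddCommGroup V] [InnerProductSpace ℂ V] [FiniteDimensional ℂ V]
    [Nontrivial V]
    (π : G →* (V ≃ₗᵢ[ℂ] V)) (hπcont : ∀ v : V, Continuous fun g => π g v)
    (hirr : ∀ U : Submodule ℂ V, (∀ (g : G), ∀ v ∈ U, π g v ∈ U) → U = ⊥ ∨ U = ⊤)
    -- Hom_G(V, Γ(L_λ)): the space of G-equivariant linear maps V → L²(G;ℂ) with
    -- range contained in Γ(L_λ) (G acting by left translation on functions):
    (HomGΓ : Submodule ℂ (V →ₗ[ℂ] Lp ℂ 2 μ))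
    (hHom : ∀ L : V →ₗ[ℂ] Lp ℂ 2 μ, L ∈ HomGΓ ↔
      ((∀ v : V, L v ∈ Γ) ∧
        ∀ (gL : G) (v : V), (fun g => (L v) (gL⁻¹ * g)) =ᵐ[μ] ⇑(L (π gL v))))
    -- the weight subspace (V* ⊗ ℂ_λ)^T = { β ∈ V* : β ∘ π(t) = χ_λ(t)·β ∀ t ∈ T }:
    (Wt : Submodule ℂ (Module.Dual ℂ V))
    (hWt : ∀ β : Module.Dual ℂ V, β ∈ Wt ↔ ∀ (t : T) (v : V),
      β (π (t : G) v) = χ t * β v) :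
    -- Γ(L_λ) is a closed subspace:
    IsClosed (Γ : Set (Lp ℂ 2 μ)) ∧
    -- Γ(L_λ) is invariant under left translation by G:
    (∀ f ∈ Γ, ∀ gL : G, ∀ f' : Lp ℂ 2 μ,
      (⇑f' =ᵐ[μ] fun g => f (gL⁻¹ * g)) → f' ∈ Γ) ∧
    -- the multiplicity of V in Γ(L_λ) equals dim (V* ⊗ ℂ_λ)^T:
    Module.finrank ℂ HomGΓ = Module.finrank ℂ Wt :=
  prequantization_multiplicities_general G μ T χ Γ hΓ V π hπcont HomGΓ hHom Wt hWt
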